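/- arXiv:2304.10744 — 2 statements merged into one kernel-verified Lean document; each statement's English description precedes it below -/
import Mathlib

section
/- Let v^t = x^0 - (η/N) Σ_{i=1}^N Σ_{s=0}^{t-1} g_i^s be the virtual sequence and x^t = x^0 - (η/N) Σ_{i=1}^N Σ_{s=0}^{φ_i(t)} g_i^s the real sequence, where for each client i in subset R_k the gradient-reception delay satisfies (t-1) - φ_i(t) ≤ 2Δ_k. If E‖g_i^s‖² ≤ G² for all i, s, then E‖v^t - x^t‖² ≤ (4η²G²/N) Σ_{k=1}^K R_k Δ_k², where R_k = |R_k|. -/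
open MeasureTheory
open scoped BigOperators

/-- Lemma 2, first bound (FedEx-Async real-virtual deviation): if
`v^t = x⁰ - (η/N) Σ_i Σ_{s=0}^{t-1} g_i^s`, `x^t = x⁰ - (η/N) Σ_i Σ_{s=0}^{φ_i(t)} g_i^s`,
the gradient-reception delays satisfy `(t-1) - φ_i(t) ≤ 2Δ_k` for each client `i` in
subset `R_k`, and `E‖g_i^s‖² ≤ G²`, then
`E‖v^t - x^t‖² ≤ (4η²G²/N) Σ_k R_k Δ_k²`. -/
theorem fedex_async_virtual_real_deviation
    {Ω : Type*} [MeasurableSpace Ω] (μ : Measure Ω) [IsProbabilityMeasure μ]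
    (d N K : ℕ) (hN : 0 < N) (hK : 0 < K)
    (η G : ℝ) (hη : 0 < η) (hG : 0 < G)
    (assign : Fin N → Fin K)
    (R : Fin K → ℕ) (hR : ∀ k, R k = (Finset.univ.filter fun i => assign i = k).card)
    (Δ : Fin K → ℕ) (hΔ : ∀ k, 0 < Δ k)
    (t : ℕ) (ht : 1 ≤ t)
    (φ : Fin N → ℕ) (hφle : ∀ i, φ i ≤ t - 1)
    (hdelay : ∀ i, (t - 1) - φ i ≤ 2 * Δ (assign i))
    (g : Fin N → ℕ → Ω → EuclideanSpace ℝ (Fin d))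
    (hgint : ∀ i s, Integrable (fun ω => ‖g i s ω‖ ^ 2) μ)
    (hg : ∀ i s, ∫ ω, ‖g i s ω‖ ^ 2 ∂μ ≤ G ^ 2)
    (x0 v x : Ω → EuclideanSpace ℝ (Fin d))
    (hv : ∀ ω, v ω = x0 ω - (η / N) • ∑ i, ∑ s ∈ Finset.range t, g i s ω)
    (hx : ∀ ω, x ω = x0 ω - (η / N) • ∑ i, ∑ s ∈ Finset.Icc 0 (φ i), g i s ω) :
    ∫ ω, ‖v ω - x ω‖ ^ 2 ∂μ ≤
      4 * η ^ 2 * G ^ 2 / N * ∑ k, (R k : ℝ) * (Δ k : ℝ) ^ 2 := by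
  have hNpos : (0:ℝ) < N := by exact_mod_cast hN
  set T : Fin N → Finset ℕ := fun i => Finset.Ico (φ i + 1) t with hT
  set D : Ω → EuclideanSpace ℝ (Fin d) := fun ω => ∑ i, ∑ s ∈ T i, g i s ω with hD
  have hsub : ∀ i : Fin N, φ i + 1 ≤ t := fun i => by have := hφle i; omega
  have hkey : ∀ (i : Fin N) ω, ∑ s ∈ Finset.range t, g i s ω =
      (∑ s ∈ Finset.Icc 0 (φ i), g i s ω) + ∑ s ∈ T i, g i s ω := by
    intro i ω
    rw [hT, Finset.range_eq_Ico, show Finset.Icc 0 (φ i) = Finset.Ico 0 (φ i + 1) from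
      (Finset.Ico_add_one_right_eq_Icc 0 (φ i)).symm]
    exact (Finset.sum_Ico_consecutive _ (Nat.zero_le _) (hsub i)).symm
  have hvx : ∀ ω, ‖v ω - x ω‖ ^ 2 = (η / N) ^ 2 * ‖D ω‖ ^ 2 := by
    intro ω
    have hA : ∑ i, ∑ s ∈ Finset.range t, g i s ω =
        (∑ i, ∑ s ∈ Finset.Icc 0 (φ i), g i s ω) + D ω := by
      rw [hD, ← Finset.sum_add_distrib]
      exact Finset.sum_congr rfl fun i _ => hkey i ω
    have h1 : v ω - x ω = -((η / N) • D ω) := by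
      rw [hv ω, hx ω, sub_sub_sub_cancel_left, hA, smul_add]
      abel
    rw [h1, norm_neg, norm_smul, mul_pow, Real.norm_eq_abs, sq_abs]
  -- sigma set
  set P : Finset ((_ : Fin N) × ℕ) := Finset.univ.sigma T with hP
  have hDP : ∀ ω, D ω = ∑ p ∈ P, g p.1 p.2 ω := by
    intro ω
    rw [hD, hP, Finset.sum_sigma]
  set M : ℕ := P.card with hM
  -- pointwise bound
  have hpt : ∀ ω, ‖D ω‖ ^ 2 ≤ (M : ℝ) * ∑ p ∈ P, ‖g p.1 p.2 ω‖ ^ 2 := by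
    intro ω
    calc ‖D ω‖ ^ 2 ≤ (∑ p ∈ P, ‖g p.1 p.2 ω‖) ^ 2 := by
          rw [hDP ω]
          exact pow_le_pow_left₀ (norm_nonneg _) (norm_sum_le _ _) 2
      _ ≤ (M : ℝ) * ∑ p ∈ P, ‖g p.1 p.2 ω‖ ^ 2 := by
          simpa using sq_sum_le_card_mul_sum_sq (s := P) (f := fun p => ‖g p.1 p.2 ω‖)
  have hIntSum : Integrable (fun ω => ∑ p ∈ P, ‖g p.1 p.2 ω‖ ^ 2) μ :=
    integrable_finset_sum _ fun p _ => hgint p.1 p.2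
  have hID : ∫ ω, ‖D ω‖ ^ 2 ∂μ ≤ (M : ℝ) * ∑ p ∈ P, ∫ ω, ‖g p.1 p.2 ω‖ ^ 2 ∂μ := by
    have h := integral_mono_of_nonneg (f := fun ω => ‖D ω‖ ^ 2)
      (g := fun ω => (M : ℝ) * ∑ p ∈ P, ‖g p.1 p.2 ω‖ ^ 2)
      (Filter.Eventually.of_forall fun ω => sq_nonneg _) (hIntSum.const_mul _)
      (Filter.Eventually.of_forall hpt)
    rwa [integral_const_mul, integral_finset_sum _ fun p _ => hgint p.1 p.2] at h
  have hIG : ∑ p ∈ P, ∫ ω, ‖g p.1 p.2 ω‖ ^ 2 ∂μ ≤ (M : ℝ) * G ^ 2 := by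
    calc ∑ p ∈ P, ∫ ω, ‖g p.1 p.2 ω‖ ^ 2 ∂μ ≤ ∑ _p ∈ P, G ^ 2 :=
          Finset.sum_le_sum fun p _ => hg p.1 p.2
      _ = (M : ℝ) * G ^ 2 := by rw [Finset.sum_const, hM, nsmul_eq_mul]
  -- counting
  have hMcard : M = ∑ i, (t - 1 - φ i) := by
    rw [hM, hP, Finset.card_sigma]
    exact Finset.sum_congr rfl fun i _ => by rw [hT]; simp [Nat.card_Ico]; omega
  have hM2 : (M : ℝ) ^ 2 ≤ (N : ℝ) * ∑ i : Fin N, (2 * (Δ (assign i) : ℝ)) ^ 2 := by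
    have h1 : (M : ℝ) = ∑ i : Fin N, ((t - 1 - φ i : ℕ) : ℝ) := by
      rw [hMcard]; push_cast; ring
    rw [h1]
    calc (∑ i : Fin N, ((t - 1 - φ i : ℕ) : ℝ)) ^ 2
        ≤ ((Finset.univ : Finset (Fin N)).card : ℝ) * ∑ i : Fin N, ((t - 1 - φ i : ℕ) : ℝ) ^ 2 :=
          sq_sum_le_card_mul_sum_sq
      _ ≤ (N : ℝ) * ∑ i : Fin N, (2 * (Δ (assign i) : ℝ)) ^ 2 := by
          simp only [Finset.card_univ, Fintype.card_fin]
          refine mul_le_mul_of_nonneg_left (Finset.sum_le_sum fun i _ => ?_) (le_of_lt hNpos)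
          have := hdelay i
          have h2 : ((t - 1 - φ i : ℕ) : ℝ) ≤ 2 * (Δ (assign i) : ℝ) := by
            exact_mod_cast this
          exact pow_le_pow_left₀ (by positivity) h2 2
  -- fiberwise sum
  have hfib : ∑ i : Fin N, ((Δ (assign i) : ℝ)) ^ 2 = ∑ k, (R k : ℝ) * (Δ k : ℝ) ^ 2 := by
    rw [← Finset.sum_fiberwise Finset.univ assign (fun i => ((Δ (assign i) : ℝ)) ^ 2)]
    refine Finset.sum_congr rfl fun k _ => ?_
    rw [hR k, Finset.sum_congr rfl (fun i hi => by
      rw [(Finset.mem_filter.mp hi).2]), Finset.sum_const, nsmul_eq_mul]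
  -- put together
  calc ∫ ω, ‖v ω - x ω‖ ^ 2 ∂μ = (η / N) ^ 2 * ∫ ω, ‖D ω‖ ^ 2 ∂μ := by
        rw [← integral_const_mul]; exact integral_congr_ae (Filter.Eventually.of_forall hvx)
    _ ≤ (η / N) ^ 2 * ((M : ℝ) * ((M : ℝ) * G ^ 2)) := by
        refine mul_le_mul_of_nonneg_left ?_ (by positivity)
        refine le_trans hID ?_
        exact mul_le_mul_of_nonneg_left hIG (by positivity)
    _ = (η / N) ^ 2 * (M : ℝ) ^ 2 * G ^ 2 := by ring
    _ ≤ (η / N) ^ 2 * ((N : ℝ) * ∑ i : Fin N, (2 * (Δ (assign i) : ℝ)) ^ 2) * G ^ 2 := by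
        refine mul_le_mul_of_nonneg_right (mul_le_mul_of_nonneg_left hM2 (by positivity))
          (by positivity)
    _ = 4 * η ^ 2 * G ^ 2 / N * ∑ i : Fin N, ((Δ (assign i) : ℝ)) ^ 2 := by
        have h4 : ∑ i : Fin N, (2 * (Δ (assign i) : ℝ)) ^ 2
            = 4 * ∑ i : Fin N, ((Δ (assign i) : ℝ)) ^ 2 := by
          rw [Finset.mul_sum]; exact Finset.sum_congr rfl fun i _ => by ring
        rw [h4]
        field_simp
    _ = 4 * η ^ 2 * G ^ 2 / N * ∑ k, (R k : ℝ) * (Δ k : ℝ) ^ 2 := by rw [hfib]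
end

section
/- Under the same setting as the virtual-sequence bound, each client i in R_k satisfies E‖v^t - x_i^t‖² ≤ 6η²G²Δ_k² + (12η²G²/N) Σ_{k'=1}^K R_{k'} Δ_{k'}², where x_i^t = x^{τ_k} - η Σ_{s=τ_k}^{t-1} g_i^s with t - τ_k ≤ Δ_k, and consequently the average satisfies (1/N) Σ_{i=1}^N E‖v^t - x_i^t‖² ≤ (18η²G²/N) Σ_{k=1}^K R_k Δ_k². -/
open MeasureTheory
open scoped BigOperators

set_option maxHeartbeats 1000000

private lemma norm_sum_sq_le_card_mul {ι E : Type*} [NormedAddCommGroup E]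
    (S : Finset ι) (f : ι → E) :
    ‖∑ j ∈ S, f j‖ ^ 2 ≤ (S.card : ℝ) * ∑ j ∈ S, ‖f j‖ ^ 2 := by
  calc ‖∑ j ∈ S, f j‖ ^ 2 ≤ (∑ j ∈ S, ‖f j‖) ^ 2 := by
        apply pow_le_pow_left₀ (norm_nonneg _) (norm_sum_le _ _)
    _ ≤ (S.card : ℝ) * ∑ j ∈ S, ‖f j‖ ^ 2 :=
        sq_sum_le_card_mul_sum_sq (s := S) (f := fun j => ‖f j‖)

private lemma norm_dsum_sq_le_card_mul {ι κ E : Type*} [NormedAddCommGroup E]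
    (S : Finset ι) (T : ι → Finset κ) (f : ι → κ → E) :
    ‖∑ i ∈ S, ∑ s ∈ T i, f i s‖ ^ 2 ≤
      ((∑ i ∈ S, (T i).card : ℕ) : ℝ) * ∑ i ∈ S, ∑ s ∈ T i, ‖f i s‖ ^ 2 := by
  have h := norm_sum_sq_le_card_mul (S.sigma T) (fun p => f p.1 p.2)
  simpa [Finset.sum_sigma, Finset.card_sigma] using h

private lemma integral_dsum_sq_le {Ω : Type*} [MeasurableSpace Ω] {μ : Measure Ω}
    [IsProbabilityMeasure μ] {ι κ : Type*} (S : Finset ι) (T : ι → Finset κ)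
    (h : ι → κ → Ω → ℝ) (G : ℝ) (hG : 0 ≤ G)
    (hint : ∀ i s, Integrable (h i s) μ) (hb : ∀ i s, ∫ ω, h i s ω ∂μ ≤ G ^ 2) :
    ∫ ω, ∑ i ∈ S, ∑ s ∈ T i, h i s ω ∂μ ≤ ((∑ i ∈ S, (T i).card : ℕ) : ℝ) * G ^ 2 := by
  rw [integral_finset_sum S (fun i _ => integrable_finset_sum _ (fun s _ => hint i s))]
  have key : ∀ i ∈ S, ∫ ω, ∑ s ∈ T i, h i s ω ∂μ ≤ ((T i).card : ℝ) * G ^ 2 := by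
    intro i _
    rw [integral_finset_sum _ (fun s _ => hint i s)]
    calc ∑ s ∈ T i, ∫ ω, h i s ω ∂μ ≤ ∑ _s ∈ T i, G ^ 2 :=
          Finset.sum_le_sum (fun s _ => hb i s)
      _ = ((T i).card : ℝ) * G ^ 2 := by rw [Finset.sum_const, nsmul_eq_mul]
  calc ∑ i ∈ S, ∫ ω, ∑ s ∈ T i, h i s ω ∂μ ≤ ∑ i ∈ S, ((T i).card : ℝ) * G ^ 2 :=
        Finset.sum_le_sum key
    _ = ((∑ i ∈ S, (T i).card : ℕ) : ℝ) * G ^ 2 := by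
        rw [← Finset.sum_mul]; push_cast; ring

/-- Lemma 2, second part (FedEx-Async local/virtual deviation): each client `i ∈ R_k`
with local model `x_i^t = x^{τ_k} - η Σ_{s=τ_k}^{t-1} g_i^s` (where `t - τ_k ≤ Δ_k`)
satisfies `E‖v^t - x_i^t‖² ≤ 6η²G²Δ_k² + (12η²G²/N) Σ_{k'} R_{k'} Δ_{k'}²`, and hence the
average satisfies `(1/N) Σ_i E‖v^t - x_i^t‖² ≤ (18η²G²/N) Σ_k R_k Δ_k²`. -/
theorem fedex_async_local_virtual_deviation
    {Ω : Type*} [MeasurableSpace Ω] (μ : Measure Ω) [IsProbabilityMeasure μ]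
    (d N K : ℕ) (hN : 0 < N) (hK : 0 < K)
    (η G : ℝ) (hη : 0 < η) (hG : 0 < G)
    (assign : Fin N → Fin K)
    (R : Fin K → ℕ) (hR : ∀ k, R k = (Finset.univ.filter fun i => assign i = k).card)
    (Δ : Fin K → ℕ) (hΔ : ∀ k, 0 < Δ k)
    (t : ℕ) (ht : 1 ≤ t)
    -- gradient reception times of the real global sequence
    (φ : Fin N → ℕ → ℕ) (hφle : ∀ i u, 1 ≤ u → φ i u ≤ u - 1)
    (hdelay : ∀ i u, 1 ≤ u → (u - 1) - φ i u ≤ 2 * Δ (assign i))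
    -- global-model version times used by the clients of each transporter
    (τ : Fin K → ℕ) (hτ1 : ∀ k, 1 ≤ τ k) (hτle : ∀ k, τ k ≤ t)
    (hτΔ : ∀ k, t - τ k ≤ Δ k)
    (g : Fin N → ℕ → Ω → EuclideanSpace ℝ (Fin d))
    (hgint : ∀ i s, Integrable (fun ω => ‖g i s ω‖ ^ 2) μ)
    (hg : ∀ i s, ∫ ω, ‖g i s ω‖ ^ 2 ∂μ ≤ G ^ 2)
    (x0 : Ω → EuclideanSpace ℝ (Fin d))
    (v xg : ℕ → Ω → EuclideanSpace ℝ (Fin d))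
    (xi : Fin N → Ω → EuclideanSpace ℝ (Fin d))
    (hv : ∀ u ω, v u ω = x0 ω - (η / N) • ∑ i, ∑ s ∈ Finset.range u, g i s ω)
    (hxg : ∀ u ω, xg u ω = x0 ω - (η / N) • ∑ i, ∑ s ∈ Finset.Icc 0 (φ i u), g i s ω)
    (hxi : ∀ i ω, xi i ω = xg (τ (assign i)) ω -
      η • ∑ s ∈ Finset.Ico (τ (assign i)) t, g i s ω)
    (hxint : ∀ i, Integrable (fun ω => ‖v t ω - xi i ω‖ ^ 2) μ) :
    (∀ i, ∫ ω, ‖v t ω - xi i ω‖ ^ 2 ∂μ ≤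
        6 * η ^ 2 * G ^ 2 * (Δ (assign i) : ℝ) ^ 2 +
          12 * η ^ 2 * G ^ 2 / N * ∑ k', (R k' : ℝ) * (Δ k' : ℝ) ^ 2) ∧
      (1 / (N : ℝ)) * ∑ i, ∫ ω, ‖v t ω - xi i ω‖ ^ 2 ∂μ ≤
        18 * η ^ 2 * G ^ 2 / N * ∑ k, (R k : ℝ) * (Δ k : ℝ) ^ 2 := by
  have hNR : (0:ℝ) < N := by exact_mod_cast hN
  -- the fiberwise identity
  have hfiber : (∑ i' : Fin N, (Δ (assign i') : ℝ) ^ 2)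
      = ∑ k', (R k' : ℝ) * (Δ k' : ℝ) ^ 2 := by
    rw [← Finset.sum_fiberwise_of_maps_to' (t := Finset.univ)
      (fun i _ => Finset.mem_univ (assign i)) (fun k' => (Δ k' : ℝ) ^ 2)]
    exact Finset.sum_congr rfl fun k' _ => by
      rw [Finset.sum_const, nsmul_eq_mul, hR k']
  set T : ℝ := ∑ k', (R k' : ℝ) * (Δ k' : ℝ) ^ 2 with hT
  have hTnn : 0 ≤ T := by
    apply Finset.sum_nonneg; intro k' _; positivity
  -- main per-client bound
  have main : ∀ i, ∫ ω, ‖v t ω - xi i ω‖ ^ 2 ∂μ ≤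
      6 * η ^ 2 * G ^ 2 * (Δ (assign i) : ℝ) ^ 2 + 12 * η ^ 2 * G ^ 2 / N * T := by
    intro i
    set k := assign i with hk
    set τk := τ k with hτk
    -- the three pieces
    set SA : Ω → EuclideanSpace ℝ (Fin d) :=
      fun ω => ∑ i', ∑ s ∈ Finset.Ico τk t, g i' s ω with hSA
    set SB : Ω → EuclideanSpace ℝ (Fin d) :=
      fun ω => ∑ i', ∑ s ∈ Finset.Ico (φ i' τk + 1) τk, g i' s ω with hSB
    set SC : Ω → EuclideanSpace ℝ (Fin d) :=
      fun ω => ∑ s ∈ Finset.Ico τk t, g i s ω with hSC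
    have hφ1 : ∀ i', φ i' τk + 1 ≤ τk := by
      intro i'
      have h1 := hφle i' τk (hτ1 k)
      have h2 := hτ1 k
      omega
    have hdecomp : ∀ ω, v t ω - xi i ω
        = η • SC ω - (η / N) • SA ω - (η / N) • SB ω := by
      intro ω
      have hsplit : (∑ i', ∑ s ∈ Finset.range t, g i' s ω)
          = (∑ i', ∑ s ∈ Finset.Icc 0 (φ i' τk), g i' s ω) + SB ω + SA ω := by
        rw [hSB, hSA, ← Finset.sum_add_distrib, ← Finset.sum_add_distrib]
        refine Finset.sum_congr rfl fun i' _ => ?_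
        rw [← Finset.Ico_add_one_right_eq_Icc, Finset.range_eq_Ico,
          Finset.sum_Ico_consecutive (fun s => g i' s ω) (Nat.zero_le _) (hφ1 i'),
          Finset.sum_Ico_consecutive (fun s => g i' s ω) (Nat.zero_le _) (hτle k)]
      rw [hv, hxi, hxg, hsplit]
      simp only [smul_add, ← hτk, ← hk, ← hSC]
      abel
    -- pointwise bound by an integrable dominating function
    set cC : ℕ := (Finset.Ico τk t).card with hcC
    set cA : ℕ := ∑ _i' : Fin N, (Finset.Ico τk t).card with hcA
    set cB : ℕ := ∑ i' : Fin N, (Finset.Ico (φ i' τk + 1) τk).card with hcB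
    set F : Ω → ℝ := fun ω =>
        3 * η ^ 2 * cC * (∑ s ∈ Finset.Ico τk t, ‖g i s ω‖ ^ 2)
      + 3 * (η / N) ^ 2 * cA * (∑ i', ∑ s ∈ Finset.Ico τk t, ‖g i' s ω‖ ^ 2)
      + 3 * (η / N) ^ 2 * cB *
          (∑ i', ∑ s ∈ Finset.Ico (φ i' τk + 1) τk, ‖g i' s ω‖ ^ 2) with hF
    have hpt : ∀ ω, ‖v t ω - xi i ω‖ ^ 2 ≤ F ω := by
      intro ω
      rw [hdecomp ω]
      have htri : ‖η • SC ω - (η / N) • SA ω - (η / N) • SB ω‖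
          ≤ ‖η • SC ω‖ + ‖(η / N) • SA ω‖ + ‖(η / N) • SB ω‖ := by
        calc ‖η • SC ω - (η / N) • SA ω - (η / N) • SB ω‖
            ≤ ‖η • SC ω - (η / N) • SA ω‖ + ‖(η / N) • SB ω‖ := norm_sub_le _ _
          _ ≤ ‖η • SC ω‖ + ‖(η / N) • SA ω‖ + ‖(η / N) • SB ω‖ := by
              have := norm_sub_le (η • SC ω) ((η / N) • SA ω)
              linarith
      have hsq : ‖η • SC ω - (η / N) • SA ω - (η / N) • SB ω‖ ^ 2
          ≤ 3 * ‖η • SC ω‖ ^ 2 + 3 * ‖(η / N) • SA ω‖ ^ 2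
            + 3 * ‖(η / N) • SB ω‖ ^ 2 := by
        have h0 := norm_nonneg (η • SC ω - (η / N) • SA ω - (η / N) • SB ω)
        nlinarith [sq_nonneg (‖η • SC ω‖ - ‖(η / N) • SA ω‖),
          sq_nonneg (‖η • SC ω‖ - ‖(η / N) • SB ω‖),
          sq_nonneg (‖(η / N) • SA ω‖ - ‖(η / N) • SB ω‖),
          norm_nonneg (η • SC ω), norm_nonneg ((η / N) • SA ω),
          norm_nonneg ((η / N) • SB ω)]
      have hC : ‖η • SC ω‖ ^ 2 ≤ η ^ 2 * (cC * ∑ s ∈ Finset.Ico τk t, ‖g i s ω‖ ^ 2) := by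
        rw [norm_smul, mul_pow, Real.norm_eq_abs, sq_abs]
        have := norm_sum_sq_le_card_mul (Finset.Ico τk t) (fun s => g i s ω)
        have hη2 : (0:ℝ) ≤ η ^ 2 := sq_nonneg _
        exact mul_le_mul_of_nonneg_left (by simpa [hcC] using this) hη2
      have hA : ‖(η / N) • SA ω‖ ^ 2
          ≤ (η / N) ^ 2 * (cA * ∑ i', ∑ s ∈ Finset.Ico τk t, ‖g i' s ω‖ ^ 2) := by
        rw [norm_smul, mul_pow, Real.norm_eq_abs, sq_abs]
        have := norm_dsum_sq_le_card_mul Finset.univ (fun _ => Finset.Ico τk t)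
          (fun i' s => g i' s ω)
        exact mul_le_mul_of_nonneg_left (by simpa [hcA] using this) (sq_nonneg _)
      have hB : ‖(η / N) • SB ω‖ ^ 2
          ≤ (η / N) ^ 2 *
            (cB * ∑ i', ∑ s ∈ Finset.Ico (φ i' τk + 1) τk, ‖g i' s ω‖ ^ 2) := by
        rw [norm_smul, mul_pow, Real.norm_eq_abs, sq_abs]
        have := norm_dsum_sq_le_card_mul Finset.univ
          (fun i' => Finset.Ico (φ i' τk + 1) τk) (fun i' s => g i' s ω)
        exact mul_le_mul_of_nonneg_left (by simpa [hcB] using this) (sq_nonneg _)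
      rw [hF]
      simp only
      linarith
    -- integrability of the dominating function
    have hint1 : Integrable (fun ω => ∑ s ∈ Finset.Ico τk t, ‖g i s ω‖ ^ 2) μ :=
      integrable_finset_sum _ (fun s _ => hgint i s)
    have hint2 : Integrable
        (fun ω => ∑ i', ∑ s ∈ Finset.Ico τk t, ‖g i' s ω‖ ^ 2) μ :=
      integrable_finset_sum _ (fun i' _ => integrable_finset_sum _ (fun s _ => hgint i' s))
    have hint3 : Integrable
        (fun ω => ∑ i', ∑ s ∈ Finset.Ico (φ i' τk + 1) τk, ‖g i' s ω‖ ^ 2) μ :=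
      integrable_finset_sum _ (fun i' _ => integrable_finset_sum _ (fun s _ => hgint i' s))
    have hFint : Integrable F μ := by
      rw [hF]
      exact ((hint1.const_mul _).add (hint2.const_mul _)).add (hint3.const_mul _)
    have hmono : ∫ ω, ‖v t ω - xi i ω‖ ^ 2 ∂μ ≤ ∫ ω, F ω ∂μ :=
      integral_mono_of_nonneg
        (Filter.Eventually.of_forall fun ω => pow_nonneg (norm_nonneg _) 2)
        hFint (Filter.Eventually.of_forall hpt)
    -- bound the integral of F
    have hI1 : ∫ ω, ∑ s ∈ Finset.Ico τk t, ‖g i s ω‖ ^ 2 ∂μ ≤ (cC : ℝ) * G ^ 2 := by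
      have := integral_dsum_sq_le {i} (fun _ => Finset.Ico τk t)
        (fun i' s ω => ‖g i' s ω‖ ^ 2) G hG.le (fun i' s => hgint i' s)
        (fun i' s => hg i' s)
      simpa [hcC] using this
    have hI2 : ∫ ω, ∑ i', ∑ s ∈ Finset.Ico τk t, ‖g i' s ω‖ ^ 2 ∂μ
        ≤ (cA : ℝ) * G ^ 2 := by
      have := integral_dsum_sq_le Finset.univ (fun _ : Fin N => Finset.Ico τk t)
        (fun i' s ω => ‖g i' s ω‖ ^ 2) G hG.le (fun i' s => hgint i' s)
        (fun i' s => hg i' s)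
      simpa [hcA] using this
    have hI3 : ∫ ω, ∑ i', ∑ s ∈ Finset.Ico (φ i' τk + 1) τk, ‖g i' s ω‖ ^ 2 ∂μ
        ≤ (cB : ℝ) * G ^ 2 := by
      have := integral_dsum_sq_le Finset.univ
        (fun i' : Fin N => Finset.Ico (φ i' τk + 1) τk)
        (fun i' s ω => ‖g i' s ω‖ ^ 2) G hG.le (fun i' s => hgint i' s)
        (fun i' s => hg i' s)
      simpa [hcB] using this
    have hIF : ∫ ω, F ω ∂μ ≤ 3 * η ^ 2 * cC * ((cC : ℝ) * G ^ 2)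
        + 3 * (η / N) ^ 2 * cA * ((cA : ℝ) * G ^ 2)
        + 3 * (η / N) ^ 2 * cB * ((cB : ℝ) * G ^ 2) := by
      have hi1' : Integrable (fun ω =>
          3 * η ^ 2 * (cC:ℝ) * ∑ s ∈ Finset.Ico τk t, ‖g i s ω‖ ^ 2) μ :=
        hint1.const_mul _
      have hi2' : Integrable (fun ω =>
          3 * (η / N) ^ 2 * (cA:ℝ) * ∑ i', ∑ s ∈ Finset.Ico τk t, ‖g i' s ω‖ ^ 2) μ :=
        hint2.const_mul _
      have hi3' : Integrable (fun ω =>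
          3 * (η / N) ^ 2 * (cB:ℝ) *
            ∑ i', ∑ s ∈ Finset.Ico (φ i' τk + 1) τk, ‖g i' s ω‖ ^ 2) μ :=
        hint3.const_mul _
      have hi12 : Integrable (fun ω =>
          3 * η ^ 2 * (cC:ℝ) * (∑ s ∈ Finset.Ico τk t, ‖g i s ω‖ ^ 2)
          + 3 * (η / N) ^ 2 * (cA:ℝ) * ∑ i', ∑ s ∈ Finset.Ico τk t, ‖g i' s ω‖ ^ 2) μ :=
        hi1'.add hi2'
      have e : ∫ ω, F ω ∂μ
          = 3 * η ^ 2 * cC * ∫ ω, ∑ s ∈ Finset.Ico τk t, ‖g i s ω‖ ^ 2 ∂μ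
          + 3 * (η / N) ^ 2 * cA *
              ∫ ω, ∑ i', ∑ s ∈ Finset.Ico τk t, ‖g i' s ω‖ ^ 2 ∂μ
          + 3 * (η / N) ^ 2 * cB *
              ∫ ω, ∑ i', ∑ s ∈ Finset.Ico (φ i' τk + 1) τk, ‖g i' s ω‖ ^ 2 ∂μ := by
        simp only [hF]
        rw [integral_add hi12 hi3', integral_add hi1' hi2',
          integral_const_mul, integral_const_mul, integral_const_mul]
      rw [e]
      have c1 : (0:ℝ) ≤ 3 * η ^ 2 * cC :=
        mul_nonneg (mul_nonneg (by norm_num) (sq_nonneg η)) (Nat.cast_nonneg _)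
      have c2 : (0:ℝ) ≤ 3 * (η / N) ^ 2 * cA :=
        mul_nonneg (mul_nonneg (by norm_num) (sq_nonneg _)) (Nat.cast_nonneg _)
      have c3 : (0:ℝ) ≤ 3 * (η / N) ^ 2 * cB :=
        mul_nonneg (mul_nonneg (by norm_num) (sq_nonneg _)) (Nat.cast_nonneg _)
      have b1 := mul_le_mul_of_nonneg_left hI1 c1
      have b2 := mul_le_mul_of_nonneg_left hI2 c2
      have b3 := mul_le_mul_of_nonneg_left hI3 c3
      linarith
    -- cardinality estimates
    have hcCle : (cC : ℝ) ≤ (Δ k : ℝ) := by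
      have : cC = t - τk := by rw [hcC, Nat.card_Ico]
      rw [this]
      exact_mod_cast hτΔ k
    have hcCnn : (0:ℝ) ≤ (cC : ℝ) := Nat.cast_nonneg _
    have hcAeq : (cA : ℝ) = N * cC := by
      rw [hcA, hcC, Finset.sum_const, Finset.card_univ, Fintype.card_fin, smul_eq_mul]
      push_cast
      ring
    have hcBle : (cB : ℝ) ≤ ∑ i' : Fin N, 2 * (Δ (assign i') : ℝ) := by
      rw [hcB]
      push_cast
      apply Finset.sum_le_sum
      intro i' _
      rw [Nat.card_Ico]
      have hd := hdelay i' τk (hτ1 k)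
      have hle := hφle i' τk (hτ1 k)
      have : τk - (φ i' τk + 1) ≤ 2 * Δ (assign i') := by omega
      exact_mod_cast this
    have hcBnn : (0:ℝ) ≤ (cB : ℝ) := Nat.cast_nonneg _
    -- Cauchy–Schwarz on the Δ's
    have hCS : (∑ i' : Fin N, 2 * (Δ (assign i') : ℝ)) ^ 2 ≤ 4 * N * T := by
      have h := sq_sum_le_card_mul_sum_sq (s := (Finset.univ : Finset (Fin N)))
        (f := fun i' => 2 * (Δ (assign i') : ℝ))
      have h2 : ∑ i' : Fin N, (2 * (Δ (assign i') : ℝ)) ^ 2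
          = 4 * ∑ i' : Fin N, (Δ (assign i') : ℝ) ^ 2 := by
        rw [Finset.mul_sum]; exact Finset.sum_congr rfl fun i' _ => by ring
      calc (∑ i' : Fin N, 2 * (Δ (assign i') : ℝ)) ^ 2
          ≤ (Finset.univ.card : ℝ) * ∑ i' : Fin N, (2 * (Δ (assign i') : ℝ)) ^ 2 := by
            exact_mod_cast h
        _ = 4 * N * T := by
            rw [h2, hfiber, Finset.card_univ, Fintype.card_fin]; ring
    have hcBsq : (cB : ℝ) ^ 2 ≤ 4 * N * T := by
      have := pow_le_pow_left₀ hcBnn hcBle 2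
      linarith [hCS, this]
    -- put everything together
    have hcnn : (0:ℝ) ≤ 3 * η ^ 2 * G ^ 2 :=
      mul_nonneg (mul_nonneg (by norm_num) (sq_nonneg η)) (sq_nonneg G)
    have hCD : (cC : ℝ) * cC ≤ (Δ k : ℝ) * (Δ k : ℝ) :=
      mul_le_mul hcCle hcCle hcCnn (Nat.cast_nonneg _)
    have step1 : 3 * η ^ 2 * cC * ((cC : ℝ) * G ^ 2) ≤ 3 * η ^ 2 * G ^ 2 * (Δ k : ℝ) ^ 2 := by
      calc 3 * η ^ 2 * cC * ((cC : ℝ) * G ^ 2)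
          = 3 * η ^ 2 * G ^ 2 * ((cC:ℝ) * cC) := by ring
        _ ≤ 3 * η ^ 2 * G ^ 2 * ((Δ k : ℝ) * (Δ k : ℝ)) :=
            mul_le_mul_of_nonneg_left hCD hcnn
        _ = 3 * η ^ 2 * G ^ 2 * (Δ k : ℝ) ^ 2 := by ring
    have step2 : 3 * (η / N) ^ 2 * cA * ((cA : ℝ) * G ^ 2)
        ≤ 3 * η ^ 2 * G ^ 2 * (Δ k : ℝ) ^ 2 := by
      rw [hcAeq]
      have hNe' : (N:ℝ) ≠ 0 := ne_of_gt hNR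
      have he : 3 * (η / N) ^ 2 * ((N:ℝ) * cC) * (((N:ℝ) * cC) * G ^ 2)
          = 3 * η ^ 2 * G ^ 2 * ((cC:ℝ) * cC) := by
        field_simp
      rw [he]
      calc 3 * η ^ 2 * G ^ 2 * ((cC:ℝ) * cC)
          ≤ 3 * η ^ 2 * G ^ 2 * ((Δ k : ℝ) * (Δ k : ℝ)) :=
            mul_le_mul_of_nonneg_left hCD hcnn
        _ = 3 * η ^ 2 * G ^ 2 * (Δ k : ℝ) ^ 2 := by ring
    have step3 : 3 * (η / N) ^ 2 * cB * ((cB : ℝ) * G ^ 2)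
        ≤ 12 * η ^ 2 * G ^ 2 / N * T := by
      have h1 : 3 * (η / N) ^ 2 * cB * ((cB : ℝ) * G ^ 2)
          = 3 * η ^ 2 * G ^ 2 / (N:ℝ) ^ 2 * ((cB:ℝ) ^ 2) := by
        field_simp
      have h2 : 3 * η ^ 2 * G ^ 2 / (N:ℝ) ^ 2 * ((cB:ℝ) ^ 2)
          ≤ 3 * η ^ 2 * G ^ 2 / (N:ℝ) ^ 2 * (4 * N * T) := by
        apply mul_le_mul_of_nonneg_left hcBsq
        have hN2 : (0:ℝ) < (N:ℝ) ^ 2 := pow_pos hNR 2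
        have : (0:ℝ) ≤ 3 * η ^ 2 * G ^ 2 :=
          mul_nonneg (mul_nonneg (by norm_num) (sq_nonneg η)) (sq_nonneg G)
        exact div_nonneg this hN2.le
      have h3 : 3 * η ^ 2 * G ^ 2 / (N:ℝ) ^ 2 * (4 * N * T)
          = 12 * η ^ 2 * G ^ 2 / N * T := by
        field_simp
        ring
      rw [h1]; rw [← h3]; exact h2
    calc ∫ ω, ‖v t ω - xi i ω‖ ^ 2 ∂μ ≤ ∫ ω, F ω ∂μ := hmono
      _ ≤ 3 * η ^ 2 * cC * ((cC : ℝ) * G ^ 2)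
          + 3 * (η / N) ^ 2 * cA * ((cA : ℝ) * G ^ 2)
          + 3 * (η / N) ^ 2 * cB * ((cB : ℝ) * G ^ 2) := hIF
      _ ≤ 6 * η ^ 2 * G ^ 2 * (Δ k : ℝ) ^ 2 + 12 * η ^ 2 * G ^ 2 / N * T := by
          linarith
  refine ⟨main, ?_⟩
  -- average bound
  have hsum : ∑ i, ∫ ω, ‖v t ω - xi i ω‖ ^ 2 ∂μ
      ≤ ∑ i : Fin N, (6 * η ^ 2 * G ^ 2 * (Δ (assign i) : ℝ) ^ 2
          + 12 * η ^ 2 * G ^ 2 / N * T) :=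
    Finset.sum_le_sum fun i _ => main i
  have hsum2 : ∑ i : Fin N, (6 * η ^ 2 * G ^ 2 * (Δ (assign i) : ℝ) ^ 2
      + 12 * η ^ 2 * G ^ 2 / N * T)
      = 6 * η ^ 2 * G ^ 2 * T + (N:ℝ) * (12 * η ^ 2 * G ^ 2 / N * T) := by
    rw [Finset.sum_add_distrib, ← Finset.mul_sum, hfiber, Finset.sum_const,
      Finset.card_univ, Fintype.card_fin, nsmul_eq_mul]
  have hNe : (N:ℝ) ≠ 0 := ne_of_gt hNR
  have : (N:ℝ) * (12 * η ^ 2 * G ^ 2 / N * T) = 12 * η ^ 2 * G ^ 2 * T := by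
    field_simp
  rw [hsum2, this] at hsum
  have h18 : (1 / (N : ℝ)) * (6 * η ^ 2 * G ^ 2 * T + 12 * η ^ 2 * G ^ 2 * T)
      = 18 * η ^ 2 * G ^ 2 / N * T := by
    field_simp; ring
  have hmul : (1 / (N : ℝ)) * ∑ i, ∫ ω, ‖v t ω - xi i ω‖ ^ 2 ∂μ
      ≤ (1 / (N : ℝ)) * (6 * η ^ 2 * G ^ 2 * T + 12 * η ^ 2 * G ^ 2 * T) := by
    apply mul_le_mul_of_nonneg_left hsum
    positivity
  rw [h18] at hmul
  exact hmul
end
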